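/- arXiv:1410.4710 — 2 statements merged into one kernel-verified Lean document; each statement's English description precedes it below -/
import Mathlib

section
/- For every integer q ≥ 3 and every integer n ≥ 3, any two distinct words w, w' ∈ CBFS_q(n) are cross-bifix-free: no nonempty proper prefix of w is a suffix of w' and no nonempty proper prefix of w' is a suffix of w. -/
/-- Value of a letter: 1 ↦ +1, 0 ↦ -1, other letters ↦ 0. -/
def mval (a : ℕ) : ℤ := if a = 1 then 1 else if a = 0 then -1 else 0

/-- Value-sum of a word. -/
def vsum (w : List ℕ) : ℤ := (w.map mval).sum

/-- A (q-2)-colored Motzkin word over the alphabet Z_q = {0,...,q-1}: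
all letters < q, every prefix has nonnegative value-sum, total value-sum 0. -/
def IsMotzkinWord (q : ℕ) (w : List ℕ) : Prop :=
  (∀ a ∈ w, a < q) ∧ (∀ u, u <+: w → 0 ≤ vsum u) ∧ vsum w = 0

/-- The set 𝓜_{q-2}(n) of (q-2)-colored Motzkin words of length n. -/
def MotzkinSet (q n : ℕ) : Set (List ℕ) := {w | w.length = n ∧ IsMotzkinWord q w}

/-- M_{q-2}(n), the number of (q-2)-colored Motzkin words of length n. -/
noncomputable def Mnum (q n : ℕ) : ℕ := (MotzkinSet q n).ncard

/-- The set Ê_{q-2}(n) of elevated (q-2)-colored Motzkin words of length n: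
words 1α0 with α ∈ 𝓜_{q-2}(n-2). -/
def ElevatedSet (q n : ℕ) : Set (List ℕ) :=
  {w | w.length = n ∧ ∃ α ∈ MotzkinSet q (n - 2), w = 1 :: (α ++ [0])}

/-- The set A_q(n). -/
def SetA (q n : ℕ) : Set (List ℕ) :=
  {w | ∃ i ≤ n / 2, ∃ α ∈ MotzkinSet q i, ∃ β ∈ ElevatedSet q (n - i), w = α ++ β} \
    {w | ∃ α ∈ ElevatedSet q (n / 2), ∃ β ∈ ElevatedSet q (n / 2), w = α ++ β}

/-- The set B_q(n). -/
def SetB (q n : ℕ) : Set (List ℕ) :=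
  {w | ∃ i ≤ n / 2 - 1, ∃ α ∈ MotzkinSet q i, ∃ β ∈ ElevatedSet q (n - i - 1),
    w = 1 :: (α ++ β)}

/-- The set C_q(n): words γ0 with γ a (q-2)-colored Motzkin word of length n-1
having no factor which is an elevated Motzkin word of length j ≥ ⌈n/2⌉. -/
def SetC (q n : ℕ) : Set (List ℕ) :=
  {w | ∃ γ ∈ MotzkinSet q (n - 1),
    (∀ j, (n + 1) / 2 ≤ j → ∀ β ∈ ElevatedSet q j, ¬ β <:+: γ) ∧ w = γ ++ [0]}

/-- The cross-bifix-free candidate set CBFS_q(n). -/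
def CBFS (q n : ℕ) : Set (List ℕ) := SetA q n ∪ SetB q n ∪ SetC q n

/-- A word is bifix-free if no nonempty proper prefix of it is also a suffix of it. -/
def BifixFree (w : List ℕ) : Prop :=
  ∀ u, u <+: w → u ≠ [] → u.length < w.length → ¬ u <:+ w

/-- BF_q(n): the set of bifix-free words of length n over Z_q. -/
def BF (q n : ℕ) : Set (List ℕ) := {w | w.length = n ∧ (∀ a ∈ w, a < q) ∧ BifixFree w}

/-- F_{k,q}(n): the number of words of length n over Z_q avoiding k consecutive 0's. -/
noncomputable def Fcount (k q n : ℕ) : ℕ :=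
  {w : List ℕ | w.length = n ∧ (∀ a ∈ w, a < q) ∧ ¬ List.replicate k 0 <:+: w}.ncard

/-- The set S_{k,q}(n) of Bajic--Stojanovic--Chee--Kiah type words: words s of length n
over Z_q with s₁ = ⋯ = s_k = 0, s_{k+1} ≠ 0, s_n ≠ 0, and such that the subword
s_{k+2} ⋯ s_{n-1} contains no k consecutive 0's. -/
def SetS (q k n : ℕ) : Set (List ℕ) :=
  {s | s.length = n ∧ (∀ a ∈ s, a < q) ∧ s.take k = List.replicate k 0 ∧
    s.getD k 0 ≠ 0 ∧ s.getLast? ≠ some 0 ∧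
    ¬ List.replicate k 0 <:+: (s.drop (k + 1)).take (n - k - 2)}

/-!
A nonempty proper prefix of a word of `CBFS q n` has nonnegative value-sum and a nonempty
proper suffix has nonpositive value-sum, so a common prefix/suffix of two such words has
value-sum `0`. Suffixes of `C`-words are negative, so a zero-sum proper suffix ends with the
final elevated block `β` of an `A`- or `B`-word, of length at least `⌈n/2⌉`. No zero-sum
proper prefix contains such a block: proper prefixes of `B`-words have value-sum at least `1`;
in a `C`-word the block would be a forbidden factor of `γ`; in an `A`-word it could only be
the whole Motzkin part `α`, which forces `n` even and `αβ` to be a product of two elevated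
words of length `n/2`, the case removed from `A_q(n)`.
-/

theorem List.IsSuffix.suffix_or_eq_append {α : Type*} {v a b : List α} (h : v <:+ a ++ b) :
    v <:+ b ∨ ∃ s, s <:+ a ∧ v = s ++ b := by
  rcases List.suffix_or_suffix_of_suffix h (List.suffix_append a b) with h' | ⟨s, rfl⟩
  · exact .inl h'
  · exact .inr ⟨s, List.suffix_append_self_iff.1 h, rfl⟩

@[simp]
theorem vsum_nil : vsum [] = 0 := rfl

@[simp]
theorem vsum_cons (x : ℕ) (w : List ℕ) : vsum (x :: w) = mval x + vsum w := by
  simp [vsum]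

@[simp]
theorem vsum_append (a b : List ℕ) : vsum (a ++ b) = vsum a + vsum b := by
  simp [vsum]

@[simp]
theorem mval_zero : mval 0 = -1 := rfl

@[simp]
theorem mval_one : mval 1 = 1 := rfl

def IsMotzkinPath (w : List ℕ) : Prop :=
  (∀ u, u <+: w → 0 ≤ vsum u) ∧ vsum w = 0

theorem IsMotzkinWord.isMotzkinPath {q : ℕ} {w : List ℕ} (hw : IsMotzkinWord q w) :
    IsMotzkinPath w :=
  hw.2

namespace IsMotzkinPath

variable {a b w u v : List ℕ}

theorem vsum_prefix_nonneg (hw : IsMotzkinPath w) (hu : u <+: w) : 0 ≤ vsum u :=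
  hw.1 u hu

theorem vsum_suffix_nonpos (hw : IsMotzkinPath w) (hv : v <:+ w) : vsum v ≤ 0 := by
  obtain ⟨p, rfl⟩ := hv
  have hp := hw.vsum_prefix_nonneg (List.prefix_append p v)
  have htotal := hw.2
  rw [vsum_append] at htotal
  omega

theorem append (ha : IsMotzkinPath a) (hb : IsMotzkinPath b) : IsMotzkinPath (a ++ b) := by
  refine ⟨fun u hu => ?_, by simp [ha.2, hb.2]⟩
  rcases List.prefix_or_prefix_of_prefix hu (List.prefix_append a b) with hua | ⟨s, rfl⟩
  · exact ha.vsum_prefix_nonneg hua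
  · have hs := hb.vsum_prefix_nonneg ((List.prefix_append_right_inj a).1 hu)
    simp only [vsum_append, ha.2]
    omega

theorem one_le_vsum_of_prefix_elevate (hw : IsMotzkinPath w) (hu : u <+: 1 :: (w ++ [0]))
    (hne : u ≠ []) (hlt : u.length < (1 :: (w ++ [0])).length) : 1 ≤ vsum u := by
  obtain ⟨t, rfl, ht⟩ := (List.prefix_cons_iff.1 hu).resolve_left hne
  have htw : t <+: w := List.prefix_of_prefix_length_le ht (List.prefix_append w [0])
    (by simp at hlt; omega)
  have := hw.vsum_prefix_nonneg htw
  simp only [vsum_cons, mval_one]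
  omega

theorem elevate (hw : IsMotzkinPath w) : IsMotzkinPath (1 :: (w ++ [0])) := by
  refine ⟨fun u hu => ?_, by simp [hw.2]⟩
  rcases eq_or_ne u [] with rfl | hne
  · simp
  rcases hu.length_le.lt_or_eq with hlt | heq
  · linarith [hw.one_le_vsum_of_prefix_elevate hu hne hlt]
  · simp [hu.eq_of_length heq, hw.2]

end IsMotzkinPath

section Elevated

variable {q m : ℕ} {β u v : List ℕ}

theorem two_le_of_mem_elevatedSet (hβ : β ∈ ElevatedSet q m) : 2 ≤ m := by
  obtain ⟨hlen, δ, -, rfl⟩ := hβ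
  simp [← hlen]

theorem isMotzkinPath_of_mem_elevatedSet (hβ : β ∈ ElevatedSet q m) : IsMotzkinPath β := by
  obtain ⟨-, δ, hδ, rfl⟩ := hβ
  exact hδ.2.isMotzkinPath.elevate

theorem one_le_vsum_of_prefix_of_mem_elevatedSet (hβ : β ∈ ElevatedSet q m) (hu : u <+: β)
    (hne : u ≠ []) (hlt : u.length < β.length) : 1 ≤ vsum u := by
  obtain ⟨-, δ, hδ, rfl⟩ := hβ
  exact hδ.2.isMotzkinPath.one_le_vsum_of_prefix_elevate hu hne hlt

theorem vsum_le_neg_one_of_suffix_of_mem_elevatedSet (hβ : β ∈ ElevatedSet q m)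
    (hv : v <:+ β) (hne : v ≠ []) (hlt : v.length < β.length) : vsum v ≤ -1 := by
  obtain ⟨p, rfl⟩ := hv
  have hp : 1 ≤ vsum p := by
    refine one_le_vsum_of_prefix_of_mem_elevatedSet hβ (List.prefix_append p v) ?_ ?_
    · rintro rfl
      simp at hlt
    · simpa using List.length_pos_iff.2 hne
  have htotal := (isMotzkinPath_of_mem_elevatedSet hβ).2
  rw [vsum_append] at htotal
  omega

theorem vsum_suffix_of_append_elevated {α : List ℕ} (hα : IsMotzkinPath α)
    (hβ : β ∈ ElevatedSet q m) (hv : v <:+ α ++ β) (hne : v ≠ []) :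
    vsum v ≤ 0 ∧ (vsum v = 0 → β <:+ v) := by
  rcases hv.suffix_or_eq_append with hvβ | ⟨s, hs, rfl⟩
  · rcases hvβ.length_le.lt_or_eq with hlt | heq
    · have := vsum_le_neg_one_of_suffix_of_mem_elevatedSet hβ hvβ hne hlt
      exact ⟨by omega, fun h => by omega⟩
    · rw [hvβ.eq_of_length heq]
      exact ⟨(isMotzkinPath_of_mem_elevatedSet hβ).2.le, fun _ => List.suffix_refl β⟩
  · have := hα.vsum_suffix_nonpos hs
    simp only [vsum_append, (isMotzkinPath_of_mem_elevatedSet hβ).2]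
    exact ⟨by omega, fun _ => List.suffix_append s β⟩

end Elevated

def HasLongElevatedSuffix (q n : ℕ) (v : List ℕ) : Prop :=
  ∃ j, (n + 1) / 2 ≤ j ∧ ∃ β ∈ ElevatedSet q j, β <:+ v

section CBFS

variable {q n : ℕ} {w w' u v : List ℕ}

theorem length_of_mem_cbfs (hn : 0 < n) (hw : w ∈ CBFS q n) : w.length = n := by
  rcases hw with (⟨⟨i, hi, α, hα, β, hβ, rfl⟩, -⟩ | ⟨i, hi, α, hα, β, hβ, rfl⟩) | ⟨γ, hγ, -, rfl⟩
  · simp only [List.length_append, hα.1, hβ.1]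
    omega
  · simp only [List.length_cons, List.length_append, hα.1, hβ.1]
    omega
  · simp only [List.length_append, hγ.1, List.length_singleton]
    omega

theorem vsum_prefix_of_mem_setA (hw : w ∈ SetA q n) (hu : u <+: w) (hne : u ≠ [])
    (hlt : u.length < w.length) :
    1 ≤ vsum u ∨ (0 ≤ vsum u ∧ ¬ HasLongElevatedSuffix q n u) := by
  obtain ⟨⟨i, hi, α, hα, β, hβ, rfl⟩, hexcl⟩ := hw
  rcases le_or_gt u.length α.length with hle | hgt
  · have huα : u <+: α := List.prefix_of_prefix_length_le hu (List.prefix_append α β) hle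
    refine .inr ⟨hα.2.isMotzkinPath.vsum_prefix_nonneg huα, ?_⟩
    rintro ⟨j, hj, β', hβ', hβ'u⟩
    -- `⌈n/2⌉ ≤ j ≤ |u| ≤ |α| = i ≤ ⌊n/2⌋` squeezes everything to `n/2`
    have hβ'l : β'.length = j := hβ'.1
    have hαl : α.length = i := hα.1
    have := hβ'u.length_le
    have hu_eq : u = α := huα.eq_of_length (by omega)
    have hβ'_eq : β' = u := hβ'u.eq_of_length (by omega)
    subst hu_eq hβ'_eq
    obtain rfl : j = n / 2 := by omega
    exact hexcl ⟨β', hβ', β, by rwa [show n / 2 = n - i by omega], rfl⟩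
  · obtain ⟨s, rfl⟩ := List.prefix_of_prefix_length_le (List.prefix_append α β) hu hgt.le
    have hs := one_le_vsum_of_prefix_of_mem_elevatedSet hβ
      ((List.prefix_append_right_inj α).1 hu) (by rintro rfl; simp at hgt)
      (by simp only [List.length_append] at hlt; omega)
    have := hα.2.isMotzkinPath.vsum_prefix_nonneg (List.prefix_refl α)
    rw [vsum_append]
    exact .inl (by omega)

theorem one_le_vsum_of_prefix_of_mem_setB (hw : w ∈ SetB q n) (hu : u <+: w) (hne : u ≠ []) :
    1 ≤ vsum u := by
  obtain ⟨i, -, α, hα, β, hβ, rfl⟩ := hw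
  obtain ⟨t, rfl, ht⟩ := (List.prefix_cons_iff.1 hu).resolve_left hne
  have := (hα.2.isMotzkinPath.append (isMotzkinPath_of_mem_elevatedSet hβ)).vsum_prefix_nonneg ht
  simp only [vsum_cons, mval_one]
  omega

theorem vsum_prefix_of_mem_setC (hw : w ∈ SetC q n) (hu : u <+: w) (hlt : u.length < w.length) :
    0 ≤ vsum u ∧ ¬ HasLongElevatedSuffix q n u := by
  obtain ⟨γ, hγ, hfac, rfl⟩ := hw
  have huγ : u <+: γ := List.prefix_of_prefix_length_le hu (List.prefix_append γ [0])
    (by simp only [List.length_append, List.length_singleton] at hlt; omega)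
  refine ⟨hγ.2.isMotzkinPath.vsum_prefix_nonneg huγ, ?_⟩
  rintro ⟨j, hj, β, hβ, hβu⟩
  exact hfac j hj β hβ (hβu.isInfix.trans huγ.isInfix)

theorem vsum_prefix_of_mem_cbfs (hw : w ∈ CBFS q n) (hu : u <+: w) (hne : u ≠ [])
    (hlt : u.length < w.length) :
    1 ≤ vsum u ∨ (0 ≤ vsum u ∧ ¬ HasLongElevatedSuffix q n u) := by
  rcases hw with (hA | hB) | hC
  · exact vsum_prefix_of_mem_setA hA hu hne hlt
  · exact .inl (one_le_vsum_of_prefix_of_mem_setB hB hu hne)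
  · exact .inr (vsum_prefix_of_mem_setC hC hu hlt)

theorem vsum_suffix_of_mem_cbfs (hw : w ∈ CBFS q n) (hv : v <:+ w) (hne : v ≠ [])
    (hlt : v.length < w.length) :
    vsum v ≤ 0 ∧ (vsum v = 0 → HasLongElevatedSuffix q n v) := by
  rcases hw with (⟨⟨i, hi, α, hα, β, hβ, rfl⟩, -⟩ | ⟨i, hi, α, hα, β, hβ, rfl⟩) | ⟨γ, hγ, -, rfl⟩
  · obtain ⟨hle, hzero⟩ := vsum_suffix_of_append_elevated hα.2.isMotzkinPath hβ hv hne
    exact ⟨hle, fun h => ⟨n - i, by omega, β, hβ, hzero h⟩⟩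
  · have hv' : v <:+ α ++ β := (List.suffix_cons_iff.1 hv).resolve_left (by rintro rfl; simp at hlt)
    obtain ⟨hle, hzero⟩ := vsum_suffix_of_append_elevated hα.2.isMotzkinPath hβ hv' hne
    have := two_le_of_mem_elevatedSet hβ
    exact ⟨hle, fun h => ⟨n - i - 1, by omega, β, hβ, hzero h⟩⟩
  · have hneg : vsum v < 0 := by
      rcases hv.suffix_or_eq_append with hv0 | ⟨s, hs, rfl⟩
      · obtain rfl : v = [0] := by simpa [hne] using List.suffix_cons_iff.1 hv0
        simp
      · have := hγ.2.isMotzkinPath.vsum_suffix_nonpos hs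
        simp only [vsum_append, vsum_cons, vsum_nil, mval_zero]
        omega
    exact ⟨hneg.le, fun h => absurd h hneg.ne⟩

theorem not_suffix_of_prefix_of_mem_cbfs (hw : w ∈ CBFS q n) (hw' : w' ∈ CBFS q n)
    (hu : u <+: w) (hne : u ≠ []) (hlt : u.length < w.length) (hlt' : u.length < w'.length) :
    ¬ u <:+ w' := by
  intro hsuf
  obtain ⟨hnonpos, hlong⟩ := vsum_suffix_of_mem_cbfs hw' hsuf hne hlt'
  rcases vsum_prefix_of_mem_cbfs hw hu hne hlt with hpos | ⟨hnonneg, hshort⟩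
  · omega
  · exact hshort (hlong (le_antisymm hnonpos hnonneg))

end CBFS

theorem cbfs_cross_bifix_free_general (q n : ℕ) (hn : 3 ≤ n)
    (w w' : List ℕ) (hw : w ∈ CBFS q n) (hw' : w' ∈ CBFS q n) :
    (∀ u, u <+: w → u ≠ [] → u.length < w.length → ¬ u <:+ w') ∧
    (∀ u, u <+: w' → u ≠ [] → u.length < w'.length → ¬ u <:+ w) := by
  have hlen : w.length = w'.length := by
    rw [length_of_mem_cbfs (by omega) hw, length_of_mem_cbfs (by omega) hw']
  exact ⟨fun u hu hne hlt => not_suffix_of_prefix_of_mem_cbfs hw hw' hu hne hlt (hlen ▸ hlt),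
    fun u hu hne hlt => not_suffix_of_prefix_of_mem_cbfs hw' hw hu hne hlt (hlen ▸ hlt)⟩

/-- CBFS_q(n) is a cross-bifix-free set: for distinct w, w' ∈ CBFS_q(n),
no nonempty proper prefix of w is a suffix of w' and vice versa. -/
theorem cbfs_cross_bifix_free (q n : ℕ) (hq : 3 ≤ q) (hn : 3 ≤ n)
    (w w' : List ℕ) (hw : w ∈ CBFS q n) (hw' : w' ∈ CBFS q n) (hne : w ≠ w') :
    (∀ u, u <+: w → u ≠ [] → u.length < w.length → ¬ u <:+ w') ∧
    (∀ u, u <+: w' → u ≠ [] → u.length < w'.length → ¬ u <:+ w) :=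
  cbfs_cross_bifix_free_general q n hn w w' hw hw'
end

section
/- Let q ≥ 2, n ≥ 4 and 2 ≤ k ≤ n−2. Then S_{k,q}(n) is a cross-bifix-free set on BF_q(n): every word of S_{k,q}(n) is bifix-free, and for any two distinct words w, w' ∈ S_{k,q}(n), no nonempty proper prefix of w is a suffix of w' and no nonempty proper prefix of w' is a suffix of w. -/
/-! Every word of `S_{k,q}(n)` begins with `0^k`, and `0^k` occurs in it at no position
`p ≥ 1` (counting from 0) with `p + k < n`: such an occurrence would either cover the nonzero
letter `s_{k+1}` (if `p ≤ k`) or lie inside `s_{k+2} ⋯ s_{n-1}`. Now let `u` be a nonempty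
proper prefix of `w` that is a suffix of `w'`. If `|u| ≤ k`, then `u` consists of zeros, yet
`w'` ends in a nonzero letter. Otherwise `u` begins with `0^k`, which then occurs in `w'` at
position `n - |u|`, a forbidden one. -/

section ReplicatePrefix

variable {α : Type*} {a : α} {k : ℕ} {u w : List α}

theorem eq_replicate_of_isPrefix_of_length_le (hw : List.replicate k a <+: w) (hu : u <+: w)
    (hlen : u.length ≤ k) : u = List.replicate u.length a :=
  (List.prefix_replicate_iff.mp (List.prefix_of_prefix_length_le hu hw (by simpa using hlen))).2

theorem exists_eq_replicate_append_of_isPrefix (hw : List.replicate k a <+: w) (hu : u <+: w)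
    (hlen : k < u.length) : ∃ t ≠ [], u = List.replicate k a ++ t := by
  obtain ⟨t, rfl⟩ := List.prefix_of_prefix_length_le hw hu (by simpa using hlen.le)
  refine ⟨t, ?_, rfl⟩
  rintro rfl
  simp at hlen

end ReplicatePrefix

section SetS

variable {q k n : ℕ} {s : List ℕ}

theorem replicate_prefix_of_mem_setS (hs : s ∈ SetS q k n) : List.replicate k 0 <+: s :=
  List.prefix_iff_eq_take.mpr (by simpa using hs.2.2.1.symm)

theorem not_eq_append_replicate_append_of_mem_setS (hs : s ∈ SetS q k n) {v t : List ℕ}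
    (hv : v ≠ []) (ht : t ≠ []) : s ≠ v ++ List.replicate k 0 ++ t := by
  obtain ⟨hlen, -, -, hletter, -, hmiddle⟩ := hs
  rintro rfl
  have hv₁ : 0 < v.length := List.length_pos_iff.mpr hv
  have ht₁ : 0 < t.length := List.length_pos_iff.mpr ht
  simp only [List.length_append, List.length_replicate] at hlen
  by_cases hvk : v.length ≤ k
  · -- the block of zeros covers the letter at index `k`
    apply hletter
    rw [List.getD_eq_getElem?_getD, List.append_assoc, List.getElem?_append_right hvk,
      List.getElem?_append_left (by simp; omega), List.getElem?_replicate]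
    simp [show k - v.length < k by omega]
  · -- the block of zeros lies inside the middle part `s_{k+2} ⋯ s_{n-1}`
    apply hmiddle
    have hdrop : (v ++ List.replicate k 0 ++ t).drop (k + 1)
        = v.drop (k + 1) ++ List.replicate k 0 ++ t := by
      rw [List.append_assoc, List.drop_append_of_le_length (by omega), List.append_assoc]
    rw [hdrop, List.take_append, List.take_of_length_le (by simp; omega)]
    exact ⟨v.drop (k + 1), _, rfl⟩

theorem not_isSuffix_of_isPrefix_of_mem_setS {w w' u : List ℕ} (hw : w ∈ SetS q k n)
    (hw' : w' ∈ SetS q k n) (hu : u <+: w) (hne : u ≠ []) (hlt : u.length < w.length) :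
    ¬ u <:+ w' := by
  rintro ⟨v, rfl⟩
  have hv : v ≠ [] := by
    rintro rfl
    exact hlt.ne (by simpa [hw.1] using hw'.1)
  by_cases hlen : u.length ≤ k
  · have hzero := eq_replicate_of_isPrefix_of_length_le (replicate_prefix_of_mem_setS hw) hu hlen
    apply hw'.2.2.2.2.1
    rw [List.getLast?_append, hzero, List.getLast?_replicate]
    simp [hne]
  · obtain ⟨t, ht, rfl⟩ := exists_eq_replicate_append_of_isPrefix
      (replicate_prefix_of_mem_setS hw) hu (by omega)
    exact not_eq_append_replicate_append_of_mem_setS hw' hv ht (List.append_assoc _ _ _).symm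

end SetS

theorem setS_cross_bifix_free_general (q n k : ℕ) :
    SetS q k n ⊆ BF q n ∧
    ∀ w ∈ SetS q k n, ∀ w' ∈ SetS q k n, w ≠ w' →
      (∀ u, u <+: w → u ≠ [] → u.length < w.length → ¬ u <:+ w') ∧
      (∀ u, u <+: w' → u ≠ [] → u.length < w'.length → ¬ u <:+ w) :=
  ⟨fun _ hw => ⟨hw.1, hw.2.1, fun _ => not_isSuffix_of_isPrefix_of_mem_setS hw hw⟩,
    fun _ hw _ hw' _ => ⟨fun _ => not_isSuffix_of_isPrefix_of_mem_setS hw hw',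
      fun _ => not_isSuffix_of_isPrefix_of_mem_setS hw' hw⟩⟩

/-- S_{k,q}(n) is a cross-bifix-free set on BF_q(n): every word of
S_{k,q}(n) is bifix-free, and for any two distinct words w, w' ∈ S_{k,q}(n), no nonempty
proper prefix of w is a suffix of w' and no nonempty proper prefix of w' is a suffix
of w. -/
theorem setS_cross_bifix_free (q n k : ℕ) (hq : 2 ≤ q) (hn : 4 ≤ n) (hk : 2 ≤ k)
    (hkn : k ≤ n - 2) :
    SetS q k n ⊆ BF q n ∧
    ∀ w ∈ SetS q k n, ∀ w' ∈ SetS q k n, w ≠ w' →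
      (∀ u, u <+: w → u ≠ [] → u.length < w.length → ¬ u <:+ w') ∧
      (∀ u, u <+: w' → u ≠ [] → u.length < w'.length → ¬ u <:+ w) :=
  setS_cross_bifix_free_general q n k
end
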